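/- arXiv:2603.13212 — 4 statements merged into one kernel-verified Lean document; each statement's English description precedes it below -/
import Mathlib

section
/- Let Ω be a finite set, H₀ : Ω → ℝ, β > 0, and define the Gibbs probability P_β(z) = exp(-β H₀(z)) / Z where Z = Σ_{z∈Ω} exp(-β H₀(z)). Suppose Φ, W ⊆ Ω are disjoint, ℬ is a finite set of 'bottleneck indicators' B : Ω → {0,1} such that every z ∈ Φ has B(z) = 1 for some B ∈ ℬ, and for each B ∈ ℬ there is an injective map M_B : Φ → W ∪ Φ with H₀(z) ≥ Δ·L + H₀(M_B z) whenever z ∈ Φ and B(z) = 1. If |ℬ| ≤ exp(θL) and βΔ > θ, then P_β(Φ) ≤ (exp(-(βΔ-θ)L) / (1 - exp(-(βΔ-θ)L))) · P_β(W). -/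
open Finset Real

/-- **Peierls argument.** If every configuration in the bottleneck `Φ` is flagged by some
bottleneck indicator `B ∈ ℬ`, each indicator comes with an injective map into `W ∪ Φ`
lowering the energy by at least `Δ·L`, `|ℬ| ≤ exp (θ L)` and `βΔ > θ`, then the Gibbs
weight of `Φ` is exponentially small compared to that of `W`. -/
theorem peierls_argument {Ω : Type*} [Fintype Ω] [DecidableEq Ω]
    (H₀ : Ω → ℝ) (β Δ θ L : ℝ) (hβ : 0 < β) (hΔ : 0 < Δ) (hθ : 0 < θ) (hL : 0 < L)
    (Φ W : Finset Ω) (hdisj : Disjoint Φ W)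
    (ℬ : Finset (Ω → Bool)) (M : (Ω → Bool) → Ω → Ω)
    (hcover : ∀ z ∈ Φ, ∃ B ∈ ℬ, B z = true)
    (hinj : ∀ B ∈ ℬ, Set.InjOn (M B) Φ)
    (hrange : ∀ B ∈ ℬ, ∀ z ∈ Φ, M B z ∈ W ∪ Φ)
    (henergy : ∀ B ∈ ℬ, ∀ z ∈ Φ, B z = true → H₀ z ≥ Δ * L + H₀ (M B z))
    (hcard : (ℬ.card : ℝ) ≤ exp (θ * L))
    (hβΔ : β * Δ > θ) :
    (∑ z ∈ Φ, exp (-β * H₀ z)) / (∑ z : Ω, exp (-β * H₀ z)) ≤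
      (exp (-(β * Δ - θ) * L) / (1 - exp (-(β * Δ - θ) * L))) *
        ((∑ z ∈ W, exp (-β * H₀ z)) / (∑ z : Ω, exp (-β * H₀ z))) := by
  set f : Ω → ℝ := fun z => exp (-β * H₀ z) with hf
  have hfpos : ∀ z, 0 < f z := fun z => exp_pos _
  set a := ∑ z ∈ Φ, f z with ha
  set b := ∑ z ∈ W, f z with hb
  set ε := exp (-(β * Δ - θ) * L) with hε
  have hεpos : 0 < ε := exp_pos _
  have hε1 : ε < 1 := by
    rw [hε, exp_lt_one_iff]
    have : 0 < β * Δ - θ := by linarith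
    nlinarith
  -- choice of bottleneck for each z
  classical
  choose g hg1 hg2 using hcover
  set G : Ω → (Ω → Bool) := fun z => if h : z ∈ Φ then g z h else fun _ => false with hG
  -- main inequality: a ≤ ε * (b + a)
  have key : a ≤ ε * (b + a) := by
    have step1 : a = ∑ B ∈ ℬ, ∑ z ∈ Φ.filter (fun z => G z = B), f z := by
      rw [ha]
      rw [← Finset.sum_fiberwise_of_maps_to (g := G) (fun z hz => by
        simp only [hG, dif_pos hz]; exact hg1 z hz)]
    have step2 : ∀ B ∈ ℬ, ∑ z ∈ Φ.filter (fun z => G z = B), f z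
        ≤ exp (-(β * Δ) * L) * (b + a) := by
      intro B hB
      have hsub : Φ.filter (fun z => G z = B) ⊆ Φ := Finset.filter_subset _ _
      have hbd : ∀ z ∈ Φ.filter (fun z => G z = B),
          f z ≤ exp (-(β * Δ) * L) * f (M B z) := by
        intro z hz
        rw [Finset.mem_filter] at hz
        obtain ⟨hzΦ, hzG⟩ := hz
        have hBz : B z = true := by
          rw [← hzG]; simp only [hG, dif_pos hzΦ]; exact hg2 z hzΦ
        have hE := henergy B hB z hzΦ hBz
        rw [hf]
        rw [← Real.exp_add]
        apply Real.exp_le_exp.2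
        nlinarith
      calc ∑ z ∈ Φ.filter (fun z => G z = B), f z
          ≤ ∑ z ∈ Φ.filter (fun z => G z = B), exp (-(β * Δ) * L) * f (M B z) :=
            Finset.sum_le_sum hbd
        _ = exp (-(β * Δ) * L) * ∑ z ∈ Φ.filter (fun z => G z = B), f (M B z) := by
            rw [Finset.mul_sum]
        _ ≤ exp (-(β * Δ) * L) * ∑ z ∈ Φ, f (M B z) := by
            apply mul_le_mul_of_nonneg_left _ (le_of_lt (exp_pos _))
            exact Finset.sum_le_sum_of_subset_of_nonneg hsub
              (fun z _ _ => le_of_lt (hfpos _))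
        _ = exp (-(β * Δ) * L) * ∑ w ∈ Φ.image (M B), f w := by
            rw [Finset.sum_image (fun x hx y hy => hinj B hB hx hy)]
        _ ≤ exp (-(β * Δ) * L) * ∑ w ∈ W ∪ Φ, f w := by
            apply mul_le_mul_of_nonneg_left _ (le_of_lt (exp_pos _))
            apply Finset.sum_le_sum_of_subset_of_nonneg
            · intro w hw
              obtain ⟨z, hz, rfl⟩ := Finset.mem_image.1 hw
              exact hrange B hB z hz
            · exact fun z _ _ => le_of_lt (hfpos _)
        _ = exp (-(β * Δ) * L) * (b + a) := by
            rw [Finset.sum_union hdisj.symm, hb, ha]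
    have hba : 0 ≤ b + a := by
      have : 0 ≤ a := Finset.sum_nonneg fun z _ => le_of_lt (hfpos z)
      have : 0 ≤ b := Finset.sum_nonneg fun z _ => le_of_lt (hfpos z)
      linarith [Finset.sum_nonneg (fun z (_ : z ∈ Φ) => le_of_lt (hfpos z))]
    calc a = ∑ B ∈ ℬ, ∑ z ∈ Φ.filter (fun z => G z = B), f z := step1
      _ ≤ ∑ B ∈ ℬ, exp (-(β * Δ) * L) * (b + a) := Finset.sum_le_sum step2
      _ = (ℬ.card : ℝ) * (exp (-(β * Δ) * L) * (b + a)) := by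
          rw [Finset.sum_const, nsmul_eq_mul]
      _ ≤ exp (θ * L) * (exp (-(β * Δ) * L) * (b + a)) := by
          apply mul_le_mul_of_nonneg_right hcard
          exact mul_nonneg (le_of_lt (exp_pos _)) hba
      _ = ε * (b + a) := by
          rw [← mul_assoc, ← Real.exp_add, hε]; ring_nf
  -- deduce a ≤ (ε/(1-ε)) * b
  have hab : a ≤ ε / (1 - ε) * b := by
    rw [div_mul_eq_mul_div, le_div_iff₀ (by linarith)]
    nlinarith
  -- divide by partition function
  rcases isEmpty_or_nonempty Ω with hΩ | hΩ
  · have hΦ : Φ = ∅ := Finset.eq_empty_of_isEmpty Φ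
    have hW : W = ∅ := Finset.eq_empty_of_isEmpty W
    simp [hΦ, hW]
  · have hZ : 0 < ∑ z : Ω, f z :=
      Finset.sum_pos (fun z _ => hfpos z) Finset.univ_nonempty
    rw [mul_div_assoc']
    gcongr
end

section
/- Let (A_n)_{n=0}^{N+1} be nonnegative reals with A_0 = 0 and 0 ≤ A_{N+1} ≤ 1. Suppose there are constants Δ > 0, v > 0 with 3v ≤ Δ and 2v² ≤ Δ·(Δ/2 − Δ/3), such that for every 1 ≤ n ≤ N: A_n · (Δ/2) ≤ v·A_{n+1} + v·A_{n−1}. If additionally (3v/Δ)·v ≤ Δ/2 − Δ/3, then A_1 ≤ (3v/Δ)^N. -/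
/-- Abstract iteration lemma: a three-term recursion inequality with a dominant diagonal
forces exponential decay of the first coefficient. -/
theorem three_term_recursion_decay (N : ℕ) (A : ℕ → ℝ) (Δ v : ℝ)
    (hA0 : A 0 = 0) (hAnn : ∀ n, 0 ≤ A n) (hAN : A (N + 1) ≤ 1)
    (hΔ : 0 < Δ) (hv : 0 < v) (h3v : 3 * v ≤ Δ)
    (h2v2 : 2 * v ^ 2 ≤ Δ * (Δ / 2 - Δ / 3))
    (hkey : (3 * v / Δ) * v ≤ Δ / 2 - Δ / 3)
    (hrec : ∀ n, 1 ≤ n → n ≤ N → A n * (Δ / 2) ≤ v * A (n + 1) + v * A (n - 1)) :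
    A 1 ≤ (3 * v / Δ) ^ N := by
  set c := 3 * v / Δ with hc
  have hcpos : 0 < c := by positivity
  have key : ∀ n, n ≤ N → A n ≤ c * A (n + 1) := by
    intro n
    induction n with
    | zero => intro _; rw [hA0]; exact mul_nonneg hcpos.le (hAnn 1)
    | succ k ih =>
      intro hk
      have hkN : k ≤ N := Nat.le_of_succ_le hk
      have h1 := ih hkN
      have h2 := hrec (k + 1) (Nat.le_add_left 1 k) hk
      simp only [Nat.add_sub_cancel] at h2
      -- A(k+1)*(Δ/2) ≤ v*A(k+2) + v*A k ≤ v*A(k+2) + v*c*A(k+1)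
      have h3 : A (k + 1) * (Δ / 2) ≤ v * A (k + 1 + 1) + v * (c * A (k + 1)) := by
        nlinarith [hAnn k, hAnn (k+1)]
      have hck : c * v ≤ Δ / 2 - Δ / 3 := hkey
      have h4 : A (k + 1) * (Δ / 3) ≤ v * A (k + 1 + 1) := by
        nlinarith [hAnn (k+1)]
      have hΔ3 : 0 < Δ / 3 := by linarith
      rw [hc]
      rw [div_mul_eq_mul_div, le_div_iff₀ hΔ]
      nlinarith [hAnn (k+1+1)]
  have main : ∀ k, k ≤ N → A 1 ≤ c ^ k * A (k + 1) := by
    intro k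
    induction k with
    | zero => intro _; simp
    | succ m ih =>
      intro hm
      have h1 := ih (Nat.le_of_succ_le hm)
      have h2 := key (m + 1) hm
      calc A 1 ≤ c ^ m * A (m + 1) := h1
        _ ≤ c ^ m * (c * A (m + 1 + 1)) := by
            apply mul_le_mul_of_nonneg_left h2 (by positivity)
        _ = c ^ (m + 1) * A (m + 1 + 1) := by ring
  have := main N le_rfl
  calc A 1 ≤ c ^ N * A (N + 1) := this
    _ ≤ c ^ N * 1 := mul_le_mul_of_nonneg_left hAN (by positivity)
    _ = c ^ N := mul_one _
end

section
/- Let H be a Hermitian operator on a finite-dimensional Hilbert space, and let P, W, Φ be orthogonal projectors with P = W + Φ, WΦ = 0, and (I−P) H W = 0. If |ψ⟩ is a unit vector with P|ψ⟩ = |ψ⟩ and P H P |ψ⟩ = E |ψ⟩, then ‖(H−E)|ψ⟩‖ ≤ ‖H‖ · ‖Φ|ψ⟩‖. -/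
/-!
Splitting `ψ = Wψ + Φψ`, the eigenvalue equation says that `P` kills the residual `Hψ - Eψ`,
so the residual is `(1 - P) H ψ`; the no-bypass condition removes the well component, leaving
`(1 - P) H Φψ`, and `1 - P` is an orthogonal projection, hence a contraction.
-/

open ContinuousLinearMap

theorem apply_sub_smul_eq_one_sub_comp_comp_apply {R M : Type*} [Ring R] [AddCommGroup M]
    [Module R M] [TopologicalSpace M] [IsTopologicalAddGroup M]
    {H P W Φ : M →L[R] M} (hPWΦ : P = W + Φ) (hnobypass : (1 - P) ∘L H ∘L W = 0)
    {c : R} {ψ : M} (hPψ : P ψ = ψ) (heig : (P ∘L H ∘L P) ψ = c • ψ) :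
    H ψ - c • ψ = ((1 - P) ∘L H ∘L Φ) ψ := by
  have hsplit : ψ = W ψ + Φ ψ := by
    conv_lhs => rw [← hPψ, hPWΦ]
    rfl
  have hwell : (1 - P) (H (W ψ)) = 0 := congr($hnobypass ψ)
  have hPHψ : P (H ψ) = c • ψ := by
    rw [← heig, comp_apply, comp_apply, hPψ]
  calc H ψ - c • ψ = (1 - P) (H ψ) := by rw [← hPHψ]; rfl
    _ = (1 - P) (H (W ψ)) + (1 - P) (H (Φ ψ)) := by rw [← map_add, ← map_add, ← hsplit]
    _ = ((1 - P) ∘L H ∘L Φ) ψ := by rw [hwell, zero_add]; rfl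

theorem restricted_eigenstate_almost_eigenstate_general {d : ℕ}
    (H P W Φ : EuclideanSpace ℂ (Fin d) →L[ℂ] EuclideanSpace ℂ (Fin d))
    (hPsa : IsSelfAdjoint P) (hPidem : P ∘L P = P)
    (hPWΦ : P = W + Φ)
    (hnobypass : (1 - P) ∘L H ∘L W = 0)
    (E : ℝ) (ψ : EuclideanSpace ℂ (Fin d))
    (hPψ : P ψ = ψ) (heig : (P ∘L H ∘L P) ψ = (E : ℂ) • ψ) :
    ‖H ψ - (E : ℂ) • ψ‖ ≤ ‖H‖ * ‖Φ ψ‖ := by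
  have hQ : IsStarProjection (1 - P) := (IsStarProjection.mk hPidem hPsa).one_sub
  rw [apply_sub_smul_eq_one_sub_comp_comp_apply hPWΦ hnobypass hPψ heig]
  calc ‖(1 - P) (H (Φ ψ))‖ ≤ 1 * ‖H (Φ ψ)‖ := (1 - P).le_of_opNorm_le (hQ.norm_le _) _
    _ = ‖H (Φ ψ)‖ := one_mul _
    _ ≤ ‖H‖ * ‖Φ ψ‖ := H.le_opNorm _

/-- A state supported in a well-plus-bottleneck subspace that is an eigenstate of the
restricted Hamiltonian is an almost eigenstate of the full Hamiltonian, with error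
controlled by its weight in the bottleneck. -/
theorem restricted_eigenstate_almost_eigenstate {d : ℕ}
    (H P W Φ : EuclideanSpace ℂ (Fin d) →L[ℂ] EuclideanSpace ℂ (Fin d))
    (hH : IsSelfAdjoint H)
    (hPsa : IsSelfAdjoint P) (hPidem : P ∘L P = P)
    (hWsa : IsSelfAdjoint W) (hWidem : W ∘L W = W)
    (hΦsa : IsSelfAdjoint Φ) (hΦidem : Φ ∘L Φ = Φ)
    (hPWΦ : P = W + Φ) (hWΦ : W ∘L Φ = 0)
    (hnobypass : (1 - P) ∘L H ∘L W = 0)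
    (E : ℝ) (ψ : EuclideanSpace ℂ (Fin d)) (hψ : ‖ψ‖ = 1)
    (hPψ : P ψ = ψ) (heig : (P ∘L H ∘L P) ψ = (E : ℂ) • ψ) :
    ‖H ψ - (E : ℂ) • ψ‖ ≤ ‖H‖ * ‖Φ ψ‖ :=
  restricted_eigenstate_almost_eigenstate_general H P W Φ hPsa hPidem hPWΦ hnobypass E ψ hPψ heig
end

section
/- Let H be Hermitian on a finite-dimensional Hilbert space and let 𝒫 be the orthogonal projector onto the span of M orthonormal vectors ψ_1, …, ψ_M satisfying ‖(H − E_m)ψ_m‖ ≤ δ for some reals E_m. Then ‖[H, 𝒫]‖ ≤ 2√M · δ. -/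
open scoped ComplexInnerProductSpace

/-! Writing `r m = (H - E m) ψ m` and `A = ∑ m, |r m⟩⟨ψ m|`, symmetry of `H` and reality of the
`E m` give `[H, 𝒫] = A - A†`. Cauchy–Schwarz together with Bessel's inequality bounds
`‖A‖ ≤ (∑ m, ‖r m‖²)^{1/2} ≤ √M δ`, and `‖A†‖ = ‖A‖`. -/

open InnerProductSpace ContinuousLinearMap

section

variable {𝕜 E F ι : Type*} [RCLike 𝕜] [NormedAddCommGroup E] [InnerProductSpace 𝕜 E]
  [NormedAddCommGroup F] [InnerProductSpace 𝕜 F] [Fintype ι]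

theorem Orthonormal.norm_sum_rankOne_le {v : ι → E} (hv : Orthonormal 𝕜 v) (r : ι → F) :
    ‖∑ i, rankOne 𝕜 (r i) (v i)‖ ≤ √(∑ i, ‖r i‖ ^ 2) := by
  refine opNorm_le_bound _ (by positivity) fun x ↦ ?_
  calc ‖(∑ i, rankOne 𝕜 (r i) (v i)) x‖ = ‖∑ i, ⟪v i, x⟫_𝕜 • r i‖ := by
        simp only [sum_apply, rankOne_apply]
    _ ≤ ∑ i, ‖⟪v i, x⟫_𝕜‖ * ‖r i‖ := by
        simpa only [norm_smul] using norm_sum_le Finset.univ fun i ↦ ⟪v i, x⟫_𝕜 • r i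
    _ ≤ √(∑ i, ‖⟪v i, x⟫_𝕜‖ ^ 2) * √(∑ i, ‖r i‖ ^ 2) := Real.sum_mul_le_sqrt_mul_sqrt _ _ _
    _ ≤ ‖x‖ * √(∑ i, ‖r i‖ ^ 2) := by
        gcongr
        exact Real.sqrt_le_iff.mpr ⟨norm_nonneg x, hv.sum_inner_products_le x⟩
    _ = √(∑ i, ‖r i‖ ^ 2) * ‖x‖ := mul_comm _ _

theorem sqrt_sum_norm_sq_le_sqrt_card_mul {r : ι → E} {δ : ℝ} (hr : ∀ i, ‖r i‖ ≤ δ) :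
    √(∑ i, ‖r i‖ ^ 2) ≤ √(Fintype.card ι) * δ := by
  cases isEmpty_or_nonempty ι with
  | inl _ => simp
  | inr hι =>
    have hδ : 0 ≤ δ := (norm_nonneg _).trans (hr hι.some)
    calc √(∑ i, ‖r i‖ ^ 2) ≤ √(∑ _i : ι, δ ^ 2) := by gcongr with i; exact hr i
      _ = √(Fintype.card ι) * δ := by
        rw [Finset.sum_const, Finset.card_univ, nsmul_eq_mul, Real.sqrt_mul (by positivity),
          Real.sqrt_sq hδ]

theorem LinearMap.IsSymmetric.commutator_sum_rankOne_self {H : E →L[𝕜] E}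
    (hH : (H : E →ₗ[𝕜] E).IsSymmetric) (ψ : ι → E) (e : ι → ℝ) :
    H ∘L (∑ i, rankOne 𝕜 (ψ i) (ψ i)) - (∑ i, rankOne 𝕜 (ψ i) (ψ i)) ∘L H
      = ∑ i, (rankOne 𝕜 (H (ψ i) - (e i : 𝕜) • ψ i) (ψ i)
        - rankOne 𝕜 (ψ i) (H (ψ i) - (e i : 𝕜) • ψ i)) := by
  ext x
  simp only [_root_.sub_apply, ContinuousLinearMap.comp_apply, _root_.sum_apply, rankOne_apply, map_sum, map_smul, ← Finset.sum_sub_distrib, inner_sub_left, inner_smul_left, RCLike.conj_ofReal]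
  refine Finset.sum_congr rfl fun i _ ↦ ?_
  rw [hH.apply_clm]
  module

end

/-- Commutator bound for the projector onto a family of `M` orthonormal δ-almost
eigenstates: `‖[H, Pr]‖ ≤ 2√M · δ`. -/
theorem commutator_projector_almost_eigenstates {d M : ℕ}
    (H Pr : EuclideanSpace ℂ (Fin d) →L[ℂ] EuclideanSpace ℂ (Fin d))
    (hH : IsSelfAdjoint H)
    (ψ : Fin M → EuclideanSpace ℂ (Fin d))
    (hortho : Orthonormal ℂ ψ)
    (E : Fin M → ℝ) (δ : ℝ)
    (hae : ∀ m, ‖H (ψ m) - (E m : ℂ) • ψ m‖ ≤ δ)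
    (hPr : ∀ x, Pr x = ∑ m, ⟪ψ m, x⟫ • ψ m) :
    ‖H ∘L Pr - Pr ∘L H‖ ≤ 2 * Real.sqrt M * δ := by
  set r := fun m ↦ H (ψ m) - (E m : ℂ) • ψ m
  set A := ∑ m, rankOne ℂ (r m) (ψ m)
  have hPr_eq : Pr = ∑ m, rankOne ℂ (ψ m) (ψ m) := by
    ext1 x
    simp [hPr]
  have hcomm : H ∘L Pr - Pr ∘L H = A - adjoint A := by
    rw [hPr_eq, hH.isSymmetric.commutator_sum_rankOne_self ψ E, Finset.sum_sub_distrib, map_sum]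
    simp only [adjoint_rankOne]
    rfl
  have hA : ‖A‖ ≤ √M * δ := by
    simpa using (hortho.norm_sum_rankOne_le r).trans (sqrt_sum_norm_sq_le_sqrt_card_mul hae)
  calc ‖H ∘L Pr - Pr ∘L H‖ ≤ ‖A‖ + ‖adjoint A‖ := hcomm ▸ norm_sub_le _ _
    _ = 2 * ‖A‖ := by rw [LinearIsometryEquiv.norm_map]; ring
    _ ≤ 2 * √M * δ := by rw [mul_assoc]; gcongr
end
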